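/- Let W_1, W_2, X_1, X_2, X_3, Y_1, Y_2, U_1, U_2, V_1, V_2 be jointly distributed random variables on finite sets such that: W_1, W_2 are independent with H(W_1) = H(W_2) = L'; H(X_1, X_2, X_3 | W_1, W_2) = 0; the Markov chain (U_1, U_2) ↔ (X_1, X_2, X_3) ↔ (W_1, W_2, Y_1, Y_2, V_1, V_2) holds; and (X_1, X_2, X_3, U_1, U_2) has the same joint distribution as (X_1, X_2, X_3, W_1, W_2). Then H(X_1, X_2, X_3) = 2·L' − H(U_1, U_2 | W_1, W_2, V_1, V_2). -/

import Mathlib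

open scoped Classical
open Real

noncomputable section

/-- A probability mass function on a finite sample space. -/
structure FinProb (Ω : Type) [Fintype Ω] where
  p : Ω → ℝ
  nonneg : ∀ ω, 0 ≤ p ω
  sum_one : ∑ ω, p ω = 1

namespace FinProb

variable {Ω : Type} [Fintype Ω]

/-- The probability of an event. -/
def prob (P : FinProb Ω) (E : Ω → Prop) : ℝ :=
  ∑ ω, if E ω then P.p ω else 0

/-- The Shannon entropy (in bits) of a random variable `Z` (with the usual
convention `0 · log 0 = 0`, automatic since `Real.logb 2 0 = 0`). -/
def entH {σ : Type} (P : FinProb Ω) (Z : Ω → σ) : ℝ :=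
  ∑ z ∈ Finset.univ.image Z,
    -(P.prob fun ω => Z ω = z) * Real.logb 2 (P.prob fun ω => Z ω = z)

/-- The conditional Shannon entropy (in bits) `H(Z | C)`. -/
def condH {σ τ : Type} (P : FinProb Ω) (Z : Ω → σ) (C : Ω → τ) : ℝ :=
  P.entH (fun ω => (Z ω, C ω)) - P.entH C

end FinProb

/-- The uniform distribution on a finite nonempty set. -/
def uniformProb (Ω : Type) [Fintype Ω] [Nonempty Ω] : FinProb Ω where
  p _ := (Fintype.card Ω : ℝ)⁻¹
  nonneg _ := by positivity
  sum_one := by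
    rw [Finset.sum_const, Finset.card_univ, nsmul_eq_mul,
      mul_inv_cancel₀ (by exact_mod_cast Fintype.card_ne_zero)]

namespace FinProb

variable {Ω : Type} [Fintype Ω] (P : FinProb Ω)

lemma prob_nonneg (E : Ω → Prop) : 0 ≤ P.prob E :=
  Finset.sum_nonneg fun ω _ => by by_cases h : E ω <;> simp [h, P.nonneg ω]

lemma prob_congr {E F : Ω → Prop} (h : ∀ ω, E ω ↔ F ω) : P.prob E = P.prob F :=
  Finset.sum_congr rfl fun ω _ => by simp only [h ω]

lemma prob_mono {E F : Ω → Prop} (h : ∀ ω, E ω → F ω) : P.prob E ≤ P.prob F :=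
  Finset.sum_le_sum fun ω _ => by
    by_cases hE : E ω
    · simp [hE, h ω hE]
    · by_cases hF : F ω <;> simp [hE, hF, P.nonneg ω]

lemma prob_true : P.prob (fun _ => True) = 1 := by simp [prob, P.sum_one]

lemma prob_eq_zero_of_empty {E : Ω → Prop} (h : ∀ ω, ¬ E ω) : P.prob E = 0 := by
  simp [prob, h]

lemma single_le_prob {E : Ω → Prop} (ω : Ω) (h : E ω) : P.p ω ≤ P.prob E := by
  have := Finset.single_le_sum (f := fun ω' => if E ω' then P.p ω' else 0)
    (fun ω' _ => by by_cases h' : E ω' <;> simp [h', P.nonneg ω']) (Finset.mem_univ ω)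
  simpa [h, prob] using this

lemma prob_partition {γ : Type} [Fintype γ] (E : Ω → Prop) (C : Ω → γ) :
    P.prob E = ∑ c, P.prob (fun ω => E ω ∧ C ω = c) := by
  have key : ∀ ω, (if E ω then P.p ω else 0) = ∑ c, if E ω ∧ C ω = c then P.p ω else 0 := by
    intro ω; by_cases h : E ω <;> simp [h]
  calc P.prob E = ∑ ω, ∑ c, if E ω ∧ C ω = c then P.p ω else 0 :=
        Finset.sum_congr rfl fun ω _ => key ω
    _ = ∑ c, ∑ ω, if E ω ∧ C ω = c then P.p ω else 0 := Finset.sum_comm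
    _ = ∑ c, P.prob (fun ω => E ω ∧ C ω = c) := by
        refine Finset.sum_congr rfl fun c _ => Finset.sum_congr rfl fun ω _ => ?_
        split_ifs <;> rfl

lemma entH_univ {σ : Type} [Fintype σ] (Z : Ω → σ) :
    P.entH Z = ∑ z : σ, -(P.prob fun ω => Z ω = z) * Real.logb 2 (P.prob fun ω => Z ω = z) := by
  unfold entH
  apply Finset.sum_subset (Finset.subset_univ _)
  intro z _ hz
  have h0 : P.prob (fun ω => Z ω = z) = 0 :=
    P.prob_eq_zero_of_empty fun ω h => hz (Finset.mem_image.2 ⟨ω, Finset.mem_univ _, h⟩)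
  simp [h0]

lemma entH_congr_dist {σ : Type} [Fintype σ] {Z Z' : Ω → σ}
    (h : ∀ s, P.prob (fun ω => Z ω = s) = P.prob (fun ω => Z' ω = s)) :
    P.entH Z = P.entH Z' := by
  rw [entH_univ, entH_univ]
  exact Finset.sum_congr rfl fun s _ => by rw [h s]

lemma entH_comp_inj {σ τ : Type} {Z : Ω → σ} (g : σ → τ) (hg : Function.Injective g) :
    P.entH (fun ω => g (Z ω)) = P.entH Z := by
  unfold entH
  have himg : (Finset.univ.image fun ω => g (Z ω)) = (Finset.univ.image Z).image g := by
    rw [Finset.image_image]; rfl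
  rw [himg, Finset.sum_image (fun a _ b _ h => hg h)]
  refine Finset.sum_congr rfl fun s _ => ?_
  have h1 : P.prob (fun ω => g (Z ω) = g s) = P.prob (fun ω => Z ω = s) :=
    P.prob_congr fun ω => ⟨fun h => hg h, fun h => by rw [h]⟩
  rw [h1]

lemma prob_eq_of_ae {σ : Type} {Z Z' : Ω → σ} (h : ∀ ω, P.p ω ≠ 0 → Z ω = Z' ω) (s : σ) :
    P.prob (fun ω => Z ω = s) = P.prob (fun ω => Z' ω = s) := by
  refine Finset.sum_congr rfl fun ω _ => ?_
  by_cases hp : P.p ω = 0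
  · rw [hp]; split_ifs <;> rfl
  · simp only [h ω hp]

lemma sum_prob_eq_one {γ : Type} [Fintype γ] (C : Ω → γ) :
    ∑ c, P.prob (fun ω => C ω = c) = 1 := by
  have h := P.prob_partition (fun _ => True) C
  rw [P.prob_true] at h
  have h2 : ∑ c, P.prob (fun ω => True ∧ C ω = c) = ∑ c, P.prob (fun ω => C ω = c) :=
    Finset.sum_congr rfl fun c _ => P.prob_congr fun ω => by simp
  rw [← h2]; exact h.symm

lemma entH_add_of_indep {α β : Type} [Fintype α] [Fintype β] (W1 : Ω → α) (W2 : Ω → β)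
    (h : ∀ a b, P.prob (fun ω => W1 ω = a ∧ W2 ω = b)
      = P.prob (fun ω => W1 ω = a) * P.prob (fun ω => W2 ω = b)) :
    P.entH (fun ω => (W1 ω, W2 ω)) = P.entH W1 + P.entH W2 := by
  rw [entH_univ, entH_univ, entH_univ, Fintype.sum_prod_type]
  have key : ∀ a b, (P.prob fun ω => (W1 ω, W2 ω) = (a, b))
      = P.prob (fun ω => W1 ω = a) * P.prob (fun ω => W2 ω = b) := by
    intro a b
    rw [← h]
    exact P.prob_congr fun ω => by simp [Prod.ext_iff]
  have split : ∀ a b,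
      -(P.prob fun ω => (W1 ω, W2 ω) = (a, b)) * Real.logb 2 (P.prob fun ω => (W1 ω, W2 ω) = (a, b))
      = (-(P.prob fun ω => W1 ω = a) * Real.logb 2 (P.prob fun ω => W1 ω = a))
          * (P.prob fun ω => W2 ω = b)
        + (P.prob fun ω => W1 ω = a)
          * (-(P.prob fun ω => W2 ω = b) * Real.logb 2 (P.prob fun ω => W2 ω = b)) := by
    intro a b
    rw [key]
    by_cases hx : P.prob (fun ω => W1 ω = a) = 0
    · simp [hx]
    by_cases hy : P.prob (fun ω => W2 ω = b) = 0
    · simp [hy]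
    rw [Real.logb_mul hx hy]; ring
  calc ∑ a, ∑ b, -(P.prob fun ω => (W1 ω, W2 ω) = (a, b))
        * Real.logb 2 (P.prob fun ω => (W1 ω, W2 ω) = (a, b))
      = ∑ a, ∑ b, ((-(P.prob fun ω => W1 ω = a) * Real.logb 2 (P.prob fun ω => W1 ω = a))
          * (P.prob fun ω => W2 ω = b)
        + (P.prob fun ω => W1 ω = a)
          * (-(P.prob fun ω => W2 ω = b) * Real.logb 2 (P.prob fun ω => W2 ω = b))) := by
        exact Finset.sum_congr rfl fun a _ => Finset.sum_congr rfl fun b _ => split a b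
    _ = _ := by
        simp only [Finset.sum_add_distrib, ← Finset.mul_sum, ← Finset.sum_mul]
        rw [P.sum_prob_eq_one W2, P.sum_prob_eq_one W1]
        ring

lemma det_of_condH_zero {α σ : Type} [Fintype α] [Fintype σ] {X : Ω → σ} {W : Ω → α}
    (h : P.condH X W = 0) :
    ∀ ω ω', P.p ω ≠ 0 → P.p ω' ≠ 0 → W ω = W ω' → X ω = X ω' := by
  set q : σ → α → ℝ := fun x w => P.prob (fun ω => (X ω, W ω) = (x, w)) with hq
  set r : α → ℝ := fun w => P.prob (fun ω => W ω = w) with hr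
  have hq0 : ∀ x w, 0 ≤ q x w := fun x w => P.prob_nonneg _
  have hr0 : ∀ w, 0 ≤ r w := fun w => P.prob_nonneg _
  have hqr : ∀ x w, q x w ≤ r w := fun x w =>
    P.prob_mono fun ω hw => congrArg Prod.snd hw
  have hsum : ∀ w, r w = ∑ x, q x w := by
    intro w
    show P.prob (fun ω => W ω = w) = ∑ x, q x w
    rw [P.prob_partition (fun ω => W ω = w) X]
    refine Finset.sum_congr rfl fun x _ => P.prob_congr fun ω => ?_
    constructor
    · rintro ⟨h1, h2⟩; rw [h1, h2]
    · intro h1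
      exact ⟨congrArg Prod.snd h1, congrArg Prod.fst h1⟩
  have hXW : P.entH (fun ω => (X ω, W ω)) = ∑ x, ∑ w, -(q x w) * Real.logb 2 (q x w) := by
    rw [P.entH_univ, Fintype.sum_prod_type]
  have hW : P.entH W = ∑ w, -(r w) * Real.logb 2 (r w) := by
    rw [P.entH_univ]
  have hW2 : P.entH W = ∑ x, ∑ w, -(q x w) * Real.logb 2 (r w) := by
    rw [hW, Finset.sum_comm]
    refine Finset.sum_congr rfl fun w _ => ?_
    rw [← Finset.sum_mul, Finset.sum_neg_distrib, ← hsum w]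
  have hzero : ∑ x, ∑ w, q x w * (Real.logb 2 (r w) - Real.logb 2 (q x w)) = 0 := by
    have hc : P.entH (fun ω => (X ω, W ω)) - P.entH W = 0 := h
    rw [hXW, hW2] at hc
    have hpt : ∀ x w, q x w * (Real.logb 2 (r w) - Real.logb 2 (q x w))
        = (-(q x w) * Real.logb 2 (q x w)) - (-(q x w) * Real.logb 2 (r w)) := by
      intro x w; ring
    simp only [hpt, Finset.sum_sub_distrib]
    exact hc
  have hnonneg : ∀ x w, 0 ≤ q x w * (Real.logb 2 (r w) - Real.logb 2 (q x w)) := by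
    intro x w
    rcases (hq0 x w).eq_or_lt with h0 | hpos
    · rw [← h0, zero_mul]
    · refine mul_nonneg (hq0 x w) (sub_nonneg.2 ?_)
      exact Real.logb_le_logb_of_le (by norm_num) hpos (hqr x w)
  have hkey : ∀ x w, q x w = 0 ∨ q x w = r w := by
    intro x w
    have houter := (Finset.sum_eq_zero_iff_of_nonneg
      (fun x _ => Finset.sum_nonneg fun w _ => hnonneg x w)).1 hzero x (Finset.mem_univ x)
    have hinner := (Finset.sum_eq_zero_iff_of_nonneg
      (fun w _ => hnonneg x w)).1 houter w (Finset.mem_univ w)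
    rcases mul_eq_zero.1 hinner with h0 | hlog
    · exact Or.inl h0
    · rcases (hq0 x w).eq_or_lt with h0 | hpos
      · exact Or.inl h0.symm
      · right
        rcases (hqr x w).eq_or_lt with heq | hlt
        · exact heq
        · exfalso
          have := Real.logb_lt_logb (b := 2) (by norm_num) hpos hlt
          linarith [sub_eq_zero.1 hlog]
  intro ω ω' hp hp' hww
  by_contra hne
  have hpω : 0 < P.p ω := lt_of_le_of_ne (P.nonneg ω) (Ne.symm hp)
  have hpω' : 0 < P.p ω' := lt_of_le_of_ne (P.nonneg ω') (Ne.symm hp')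
  have h1 : P.p ω ≤ q (X ω) (W ω') := by
    simp only [hq]
    exact P.single_le_prob ω (by rw [hww])
  have h2 : P.p ω' ≤ q (X ω') (W ω') := by
    simp only [hq]
    exact P.single_le_prob ω' rfl
  have e1 : q (X ω) (W ω') = r (W ω') := by
    rcases hkey (X ω) (W ω') with h0 | h0
    · linarith
    · exact h0
  have e2 : q (X ω') (W ω') = r (W ω') := by
    rcases hkey (X ω') (W ω') with h0 | h0
    · linarith
    · exact h0
  have hdisj : q (X ω) (W ω') + q (X ω') (W ω') ≤ r (W ω') := by
    simp only [hq, hr]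
    unfold prob
    rw [← Finset.sum_add_distrib]
    refine Finset.sum_le_sum fun ω'' _ => ?_
    by_cases g1 : (X ω'', W ω'') = (X ω, W ω')
    · by_cases g2 : (X ω'', W ω'') = (X ω', W ω')
      · exact absurd (congrArg Prod.fst (g1.symm.trans g2)) hne
      · have hw2 : W ω'' = W ω' := congrArg Prod.snd g1
        have hx1 : X ω'' = X ω := congrArg Prod.fst g1
        have hx2 : X ω'' ≠ X ω' := fun hc => g2 (by rw [hc, hw2])
        simp [hw2, hx1, hx2, hne, Ne.symm hne]
    · by_cases g2 : (X ω'', W ω'') = (X ω', W ω')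
      · have hw2 : W ω'' = W ω' := congrArg Prod.snd g2
        have hx2 : X ω'' = X ω' := congrArg Prod.fst g2
        have hx1 : X ω'' ≠ X ω := fun hc => g1 (by rw [hc, hw2])
        simp [hw2, hx1, hx2, hne, Ne.symm hne]
      · simp only [g1, g2, if_false]
        split_ifs
        · simpa using P.nonneg ω''
        · simp
  linarith

lemma exists_pos : ∃ ω, P.p ω ≠ 0 := by
  by_contra hc
  push_neg at hc
  have := P.sum_one
  simp only [hc] at this
  simp at this

lemma entH_pair_det {σ τ : Type} [Fintype σ] [Fintype τ] {X : Ω → σ} {T : Ω → τ}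
    (h : ∀ ω ω', P.p ω ≠ 0 → P.p ω' ≠ 0 → T ω = T ω' → X ω = X ω') :
    P.entH (fun ω => (X ω, T ω)) = P.entH T := by
  obtain ⟨ω0, hω0⟩ := P.exists_pos
  set f : τ → σ := fun t => if h' : ∃ ω, P.p ω ≠ 0 ∧ T ω = t then X h'.choose else X ω0 with hf
  have hae : ∀ ω, P.p ω ≠ 0 → (X ω, T ω) = (f (T ω), T ω) := by
    intro ω hp
    have hex : ∃ ω', P.p ω' ≠ 0 ∧ T ω' = T ω := ⟨ω, hp, rfl⟩
    have spec := hex.choose_spec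
    have hfval : f (T ω) = X hex.choose := by
      simp only [hf]
      rw [dif_pos hex]
    rw [hfval]
    exact Prod.ext (h ω hex.choose hp spec.1 spec.2.symm) rfl
  have h1 : P.entH (fun ω => (X ω, T ω)) = P.entH (fun ω => (f (T ω), T ω)) :=
    P.entH_congr_dist fun s => P.prob_eq_of_ae hae s
  rw [h1]
  exact P.entH_comp_inj (fun t => (f t, t)) fun a b hab => congrArg Prod.snd hab

lemma markov_entropy {α β γ : Type} [Fintype α] [Fintype β] [Fintype γ]
    (U : Ω → α) (X : Ω → β) (Z : Ω → γ)
    (h : ∀ u x z,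
      P.prob (fun ω => U ω = u ∧ X ω = x ∧ Z ω = z) * P.prob (fun ω => X ω = x)
        = P.prob (fun ω => U ω = u ∧ X ω = x) * P.prob (fun ω => X ω = x ∧ Z ω = z)) :
    P.entH (fun ω => (U ω, X ω, Z ω)) + P.entH X
      = P.entH (fun ω => (U ω, X ω)) + P.entH (fun ω => (X ω, Z ω)) := by
  set q3 : α → β → γ → ℝ := fun u x z => P.prob (fun ω => U ω = u ∧ X ω = x ∧ Z ω = z) with hq3
  set qUX : α → β → ℝ := fun u x => P.prob (fun ω => U ω = u ∧ X ω = x) with hqUX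
  set qXZ : β → γ → ℝ := fun x z => P.prob (fun ω => X ω = x ∧ Z ω = z) with hqXZ
  set qX : β → ℝ := fun x => P.prob (fun ω => X ω = x) with hqX
  -- marginalization facts
  have mUX : ∀ u x, qUX u x = ∑ z, q3 u x z := by
    intro u x
    show P.prob (fun ω => U ω = u ∧ X ω = x) = _
    rw [P.prob_partition _ Z]
    exact Finset.sum_congr rfl fun z _ => P.prob_congr fun ω => by tauto
  have mXZ : ∀ x z, qXZ x z = ∑ u, q3 u x z := by
    intro x z
    show P.prob (fun ω => X ω = x ∧ Z ω = z) = _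
    rw [P.prob_partition _ U]
    exact Finset.sum_congr rfl fun u _ => P.prob_congr fun ω => by tauto
  have mX : ∀ x, qX x = ∑ u, ∑ z, q3 u x z := by
    intro x
    show P.prob (fun ω => X ω = x) = _
    rw [P.prob_partition _ U]
    refine Finset.sum_congr rfl fun u _ => ?_
    rw [P.prob_partition _ Z]
    exact Finset.sum_congr rfl fun z _ => P.prob_congr fun ω => by tauto
  -- entropy expansions
  have e3 : P.entH (fun ω => (U ω, X ω, Z ω)) = ∑ u, ∑ x, ∑ z, -(q3 u x z) * Real.logb 2 (q3 u x z) := by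
    rw [P.entH_univ, Fintype.sum_prod_type]
    refine Finset.sum_congr rfl fun u _ => ?_
    rw [Fintype.sum_prod_type]
    refine Finset.sum_congr rfl fun x _ => Finset.sum_congr rfl fun z _ => ?_
    have : (P.prob fun ω => (U ω, X ω, Z ω) = (u, x, z)) = q3 u x z := by
      show _ = P.prob (fun ω => U ω = u ∧ X ω = x ∧ Z ω = z)
      exact P.prob_congr fun ω => by simp [Prod.ext_iff]
    rw [this]
  have eUX : P.entH (fun ω => (U ω, X ω)) = ∑ u, ∑ x, -(qUX u x) * Real.logb 2 (qUX u x) := by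
    rw [P.entH_univ, Fintype.sum_prod_type]
    refine Finset.sum_congr rfl fun u _ => Finset.sum_congr rfl fun x _ => ?_
    have : (P.prob fun ω => (U ω, X ω) = (u, x)) = qUX u x := by
      show _ = P.prob (fun ω => U ω = u ∧ X ω = x)
      exact P.prob_congr fun ω => by simp [Prod.ext_iff]
    rw [this]
  have eXZ : P.entH (fun ω => (X ω, Z ω)) = ∑ x, ∑ z, -(qXZ x z) * Real.logb 2 (qXZ x z) := by
    rw [P.entH_univ, Fintype.sum_prod_type]
    refine Finset.sum_congr rfl fun x _ => Finset.sum_congr rfl fun z _ => ?_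
    have : (P.prob fun ω => (X ω, Z ω) = (x, z)) = qXZ x z := by
      show _ = P.prob (fun ω => X ω = x ∧ Z ω = z)
      exact P.prob_congr fun ω => by simp [Prod.ext_iff]
    rw [this]
  have eX : P.entH X = ∑ x, -(qX x) * Real.logb 2 (qX x) := P.entH_univ X
  -- rewrite all marginal entropies as triple sums
  have eUX' : P.entH (fun ω => (U ω, X ω)) = ∑ u, ∑ x, ∑ z, -(q3 u x z) * Real.logb 2 (qUX u x) := by
    rw [eUX]
    refine Finset.sum_congr rfl fun u _ => Finset.sum_congr rfl fun x _ => ?_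
    rw [← Finset.sum_mul, Finset.sum_neg_distrib, ← mUX u x]
  have eXZ' : P.entH (fun ω => (X ω, Z ω)) = ∑ u, ∑ x, ∑ z, -(q3 u x z) * Real.logb 2 (qXZ x z) := by
    rw [eXZ]
    have step1 : ∑ x, ∑ z, -(qXZ x z) * Real.logb 2 (qXZ x z)
        = ∑ x, ∑ z, ∑ u, -(q3 u x z) * Real.logb 2 (qXZ x z) := by
      refine Finset.sum_congr rfl fun x _ => Finset.sum_congr rfl fun z _ => ?_
      rw [← Finset.sum_mul, Finset.sum_neg_distrib, ← mXZ x z]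
    rw [step1]
    rw [show (∑ x, ∑ z, ∑ u, -(q3 u x z) * Real.logb 2 (qXZ x z))
        = ∑ x, ∑ u, ∑ z, -(q3 u x z) * Real.logb 2 (qXZ x z) from
      Finset.sum_congr rfl fun x _ => Finset.sum_comm]
    exact Finset.sum_comm
  have eX' : P.entH X = ∑ u, ∑ x, ∑ z, -(q3 u x z) * Real.logb 2 (qX x) := by
    rw [eX]
    have step1 : ∑ x, -(qX x) * Real.logb 2 (qX x)
        = ∑ x, ∑ u, ∑ z, -(q3 u x z) * Real.logb 2 (qX x) := by
      refine Finset.sum_congr rfl fun x _ => ?_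
      rw [show (∑ u, ∑ z, -(q3 u x z) * Real.logb 2 (qX x))
          = ∑ u, (∑ z, -(q3 u x z)) * Real.logb 2 (qX x) from
        Finset.sum_congr rfl fun u _ => (Finset.sum_mul _ _ _).symm]
      rw [← Finset.sum_mul]
      congr 1
      rw [show (∑ u, ∑ z, -(q3 u x z)) = -∑ u, ∑ z, q3 u x z from by
        simp only [Finset.sum_neg_distrib]]
      rw [← mX x]
    rw [step1]
    exact Finset.sum_comm
  have h' : ∀ u x z, q3 u x z * qX x = qUX u x * qXZ x z := h
  have pt : ∀ u x z,
      -(q3 u x z) * Real.logb 2 (q3 u x z) + -(q3 u x z) * Real.logb 2 (qX x)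
        = -(q3 u x z) * Real.logb 2 (qUX u x) + -(q3 u x z) * Real.logb 2 (qXZ x z) := by
    intro u x z
    rcases (P.prob_nonneg _ : (0:ℝ) ≤ q3 u x z).eq_or_lt with h0 | hpos
    · have h00 : q3 u x z = 0 := h0.symm
      rw [h00]; ring
    · have l1 : q3 u x z ≤ qUX u x := P.prob_mono fun ω hh => ⟨hh.1, hh.2.1⟩
      have l2 : q3 u x z ≤ qXZ x z := P.prob_mono fun ω hh => ⟨hh.2.1, hh.2.2⟩
      have l3 : q3 u x z ≤ qX x := P.prob_mono fun ω hh => hh.2.1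
      have hlog : Real.logb 2 (q3 u x z) + Real.logb 2 (qX x)
          = Real.logb 2 (qUX u x) + Real.logb 2 (qXZ x z) := by
        rw [← Real.logb_mul (ne_of_gt hpos) (ne_of_gt (lt_of_lt_of_le hpos l3)),
          ← Real.logb_mul (ne_of_gt (lt_of_lt_of_le hpos l1)) (ne_of_gt (lt_of_lt_of_le hpos l2)),
          h']
      linear_combination (-(q3 u x z)) * hlog
  rw [e3, eX', eUX', eXZ']
  simp only [← Finset.sum_add_distrib]
  exact Finset.sum_congr rfl fun u _ => Finset.sum_congr rfl fun x _ =>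
    Finset.sum_congr rfl fun z _ => pt u x z

end FinProb

set_option maxHeartbeats 2000000

/-- The pseudo-message identity for the database-1 side: if (U₁,U₂) is Markov-coupled to
(W₁,W₂,Y₁,Y₂,V₁,V₂) through (X₁,X₂,X₃), with (X₁,X₂,X₃,U₁,U₂) distributed identically
to (X₁,X₂,X₃,W₁,W₂), then H(X₁,X₂,X₃) = 2L' − H(U₁,U₂ | W₁,W₂,V₁,V₂). -/
theorem pseudo_message_identity_X
    {Ω A1 A2 B1 B2 B3 C1 C2 : Type} [Fintype Ω]
    [Fintype A1] [Fintype A2] [Fintype B1] [Fintype B2] [Fintype B3]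
    [Fintype C1] [Fintype C2]
    (P : FinProb Ω)
    (W1 U1 V1 : Ω → A1) (W2 U2 V2 : Ω → A2)
    (X1 : Ω → B1) (X2 : Ω → B2) (X3 : Ω → B3) (Y1 : Ω → C1) (Y2 : Ω → C2) (L' : ℝ)
    (hHW1 : P.entH W1 = L') (hHW2 : P.entH W2 = L')
    (hindep : ∀ (a : A1) (b : A2),
      P.prob (fun ω => W1 ω = a ∧ W2 ω = b) =
        P.prob (fun ω => W1 ω = a) * P.prob (fun ω => W2 ω = b))
    (hdet : P.condH (fun ω => (X1 ω, X2 ω, X3 ω)) (fun ω => (W1 ω, W2 ω)) = 0)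
    (hmarkov : ∀ (u : A1 × A2) (x : B1 × B2 × B3) (z : A1 × A2 × C1 × C2 × A1 × A2),
      P.prob (fun ω => (U1 ω, U2 ω) = u ∧ (X1 ω, X2 ω, X3 ω) = x ∧
            (W1 ω, W2 ω, Y1 ω, Y2 ω, V1 ω, V2 ω) = z) *
          P.prob (fun ω => (X1 ω, X2 ω, X3 ω) = x)
        = P.prob (fun ω => (U1 ω, U2 ω) = u ∧ (X1 ω, X2 ω, X3 ω) = x) *
          P.prob (fun ω => (X1 ω, X2 ω, X3 ω) = x ∧
            (W1 ω, W2 ω, Y1 ω, Y2 ω, V1 ω, V2 ω) = z))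
    (hmirror : ∀ (x : B1 × B2 × B3) (u : A1 × A2),
      P.prob (fun ω => (X1 ω, X2 ω, X3 ω) = x ∧ (U1 ω, U2 ω) = u)
        = P.prob (fun ω => (X1 ω, X2 ω, X3 ω) = x ∧ (W1 ω, W2 ω) = u)) :
    P.entH (fun ω => (X1 ω, X2 ω, X3 ω))
      = 2 * L' - P.condH (fun ω => (U1 ω, U2 ω))
          (fun ω => (W1 ω, W2 ω, V1 ω, V2 ω)) := by
  have hW : P.entH (fun ω => (W1 ω, W2 ω)) = 2 * L' := by
    rw [P.entH_add_of_indep W1 W2 hindep, hHW1, hHW2]; ring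
  have hdet' : P.entH (fun ω => ((X1 ω, X2 ω, X3 ω), (W1 ω, W2 ω)))
      - P.entH (fun ω => (W1 ω, W2 ω)) = 0 := hdet
  have hdf : ∀ ω ω', P.p ω ≠ 0 → P.p ω' ≠ 0 → (W1 ω, W2 ω) = (W1 ω', W2 ω') →
      (X1 ω, X2 ω, X3 ω) = (X1 ω', X2 ω', X3 ω') := P.det_of_condH_zero hdet
  -- marginalized Markov condition
  have hmark' : ∀ (u : A1 × A2) (x : B1 × B2 × B3) (wv : A1 × A2 × A1 × A2),
      P.prob (fun ω => (U1 ω, U2 ω) = u ∧ (X1 ω, X2 ω, X3 ω) = x ∧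
          (W1 ω, W2 ω, V1 ω, V2 ω) = wv)
        * P.prob (fun ω => (X1 ω, X2 ω, X3 ω) = x)
      = P.prob (fun ω => (U1 ω, U2 ω) = u ∧ (X1 ω, X2 ω, X3 ω) = x)
        * P.prob (fun ω => (X1 ω, X2 ω, X3 ω) = x ∧ (W1 ω, W2 ω, V1 ω, V2 ω) = wv) := by
    rintro u x ⟨w1, w2, v1, v2⟩
    have e1 : P.prob (fun ω => (U1 ω, U2 ω) = u ∧ (X1 ω, X2 ω, X3 ω) = x ∧
          (W1 ω, W2 ω, V1 ω, V2 ω) = (w1, w2, v1, v2))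
        = ∑ y : C1 × C2, P.prob (fun ω => (U1 ω, U2 ω) = u ∧ (X1 ω, X2 ω, X3 ω) = x ∧
            (W1 ω, W2 ω, Y1 ω, Y2 ω, V1 ω, V2 ω) = (w1, w2, y.1, y.2, v1, v2)) := by
      rw [P.prob_partition _ (fun ω => (Y1 ω, Y2 ω))]
      refine Finset.sum_congr rfl fun y _ => P.prob_congr fun ω => ?_
      simp only [Prod.ext_iff]
      tauto
    have e2 : P.prob (fun ω => (X1 ω, X2 ω, X3 ω) = x ∧
          (W1 ω, W2 ω, V1 ω, V2 ω) = (w1, w2, v1, v2))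
        = ∑ y : C1 × C2, P.prob (fun ω => (X1 ω, X2 ω, X3 ω) = x ∧
            (W1 ω, W2 ω, Y1 ω, Y2 ω, V1 ω, V2 ω) = (w1, w2, y.1, y.2, v1, v2)) := by
      rw [P.prob_partition _ (fun ω => (Y1 ω, Y2 ω))]
      refine Finset.sum_congr rfl fun y _ => P.prob_congr fun ω => ?_
      simp only [Prod.ext_iff]
      tauto
    rw [e1, e2, Finset.sum_mul, Finset.mul_sum]
    exact Finset.sum_congr rfl fun y _ => hmarkov u x (w1, w2, y.1, y.2, v1, v2)
  have hME := P.markov_entropy (fun ω => (U1 ω, U2 ω)) (fun ω => (X1 ω, X2 ω, X3 ω))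
      (fun ω => (W1 ω, W2 ω, V1 ω, V2 ω)) hmark'
  -- determinism: drop X next to (W,V)
  have hd1 : P.entH (fun ω => ((X1 ω, X2 ω, X3 ω), (W1 ω, W2 ω, V1 ω, V2 ω)))
      = P.entH (fun ω => (W1 ω, W2 ω, V1 ω, V2 ω)) := by
    refine P.entH_pair_det fun ω ω' hp hp' ht => hdf ω ω' hp hp' ?_
    have h1 : W1 ω = W1 ω' := congrArg Prod.fst ht
    have h2 : W2 ω = W2 ω' := congrArg (fun t => t.2.1) ht
    rw [h1, h2]
  have hsw : P.entH (fun ω => ((X1 ω, X2 ω, X3 ω), ((U1 ω, U2 ω), (W1 ω, W2 ω, V1 ω, V2 ω))))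
      = P.entH (fun ω => ((U1 ω, U2 ω), (X1 ω, X2 ω, X3 ω), (W1 ω, W2 ω, V1 ω, V2 ω))) :=
    P.entH_comp_inj
      (Z := fun ω => ((U1 ω, U2 ω), (X1 ω, X2 ω, X3 ω), (W1 ω, W2 ω, V1 ω, V2 ω)))
      (fun p : (A1 × A2) × (B1 × B2 × B3) × (A1 × A2 × A1 × A2) => (p.2.1, p.1, p.2.2))
      (fun a b hab => by
        obtain ⟨a1, a2, a3⟩ := a
        obtain ⟨b1, b2, b3⟩ := b
        simp only [Prod.ext_iff] at hab ⊢
        tauto)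
  have hd2 : P.entH (fun ω => ((X1 ω, X2 ω, X3 ω), ((U1 ω, U2 ω), (W1 ω, W2 ω, V1 ω, V2 ω))))
      = P.entH (fun ω => ((U1 ω, U2 ω), (W1 ω, W2 ω, V1 ω, V2 ω))) := by
    refine P.entH_pair_det fun ω ω' hp hp' ht => hdf ω ω' hp hp' ?_
    have h1 : W1 ω = W1 ω' := congrArg (fun t => t.2.1) ht
    have h2 : W2 ω = W2 ω' := congrArg (fun t => t.2.2.1) ht
    rw [h1, h2]
  -- H(U,X) = H(X,W) = H(W) = 2L'
  have hswap2 : P.entH (fun ω => ((X1 ω, X2 ω, X3 ω), (U1 ω, U2 ω)))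
      = P.entH (fun ω => ((U1 ω, U2 ω), (X1 ω, X2 ω, X3 ω))) :=
    P.entH_comp_inj
      (Z := fun ω => ((U1 ω, U2 ω), (X1 ω, X2 ω, X3 ω)))
      (fun p : (A1 × A2) × (B1 × B2 × B3) => (p.2, p.1))
      (fun a b hab => by
        obtain ⟨a1, a2⟩ := a
        obtain ⟨b1, b2⟩ := b
        simp only [Prod.ext_iff] at hab ⊢
        tauto)
  have hmir : P.entH (fun ω => ((X1 ω, X2 ω, X3 ω), (U1 ω, U2 ω)))
      = P.entH (fun ω => ((X1 ω, X2 ω, X3 ω), (W1 ω, W2 ω))) := by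
    refine P.entH_congr_dist fun s => ?_
    obtain ⟨x, u⟩ := s
    calc P.prob (fun ω => ((X1 ω, X2 ω, X3 ω), (U1 ω, U2 ω)) = (x, u))
        = P.prob (fun ω => (X1 ω, X2 ω, X3 ω) = x ∧ (U1 ω, U2 ω) = u) :=
          P.prob_congr fun ω => by
            constructor
            · exact fun h => ⟨congrArg Prod.fst h, congrArg Prod.snd h⟩
            · rintro ⟨h1, h2⟩; rw [h1, h2]
      _ = P.prob (fun ω => (X1 ω, X2 ω, X3 ω) = x ∧ (W1 ω, W2 ω) = u) := hmirror x u
      _ = P.prob (fun ω => ((X1 ω, X2 ω, X3 ω), (W1 ω, W2 ω)) = (x, u)) :=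
          (P.prob_congr fun ω => by
            constructor
            · exact fun h => ⟨congrArg Prod.fst h, congrArg Prod.snd h⟩
            · rintro ⟨h1, h2⟩; rw [h1, h2]).symm
  have hcond : P.condH (fun ω => (U1 ω, U2 ω)) (fun ω => (W1 ω, W2 ω, V1 ω, V2 ω))
      = P.entH (fun ω => ((U1 ω, U2 ω), (W1 ω, W2 ω, V1 ω, V2 ω)))
        - P.entH (fun ω => (W1 ω, W2 ω, V1 ω, V2 ω)) := rfl
  rw [hcond]
  linarith [hME, hd1, hsw, hd2, hswap2, hmir, hdet', hW]
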